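/- arXiv:1212.0025 — 2 statements merged into one kernel-verified Lean document; each statement's English description precedes it below -/
import Mathlib

section
/- For any n×n complex matrix A, |Per(A)| ≤ ‖A‖^n, where ‖A‖ is the operator norm of A. -/
/-!
Glynn's formula: for sign vectors `ε ∈ {±1}ⁿ`,
`2ⁿ · per A = ∑_ε (∏ⱼ εⱼ) ∏ᵢ (A ε)ᵢ`. Expanding the product, the coefficient of
`∏ᵢ A i (f i)` is the sum of the character `ε ↦ ∏ᵢ εᵢ ε_{f i}` of the group `{±1}ⁿ`, which
vanishes unless `f` is a permutation. Each term is bounded by AM-GM: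
`∏ᵢ |(A ε)ᵢ|² ≤ (‖A ε‖² / n)ⁿ ≤ ‖A‖²ⁿ`, because `‖ε‖² = n`.
-/

/-- The operator (spectral) 2-norm of a complex matrix. -/
noncomputable def opNorm {m k : ℕ} (A : Matrix (Fin m) (Fin k) ℂ) : ℝ :=
  ‖LinearMap.toContinuousLinearMap (Matrix.toEuclideanLin A)‖

open Finset Function Matrix

variable {ι : Type*} [Fintype ι]

def signCharacter (f : ι → ι) : (ι → ℤˣ) →* ℤ :=
  ∏ i, (Units.coeHom ℤ).comp (Pi.evalMonoidHom (fun _ : ι => ℤˣ) i * Pi.evalMonoidHom _ (f i))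

lemma signCharacter_apply (f : ι → ι) (ε : ι → ℤˣ) :
    signCharacter f ε = ∏ i, ((ε i : ℤ) * (ε (f i) : ℤ)) := by
  simp [signCharacter]

lemma signCharacter_eq_one_of_bijective {f : ι → ι} (hf : Bijective f) :
    signCharacter f = 1 := by
  refine MonoidHom.ext fun ε => ?_
  rw [signCharacter_apply, prod_mul_distrib,
    Fintype.prod_bijective f hf (fun i => (ε (f i) : ℤ)) (fun j => ε j) fun _ => rfl,
    ← sq, ← Units.coe_prod, ← Units.val_pow_eq_pow_val, Int.units_sq]
  rfl

lemma signCharacter_ne_one_of_not_surjective [DecidableEq ι] {f : ι → ι} (hf : ¬ Surjective f) :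
    signCharacter f ≠ 1 := by
  obtain ⟨j, hj⟩ := not_forall.mp hf
  intro h_one
  -- flipping the sign at `j ∉ range f` changes the value to `-1`
  have h_flip := DFunLike.congr_fun h_one (Pi.mulSingle j (-1))
  rw [signCharacter_apply, prod_mul_distrib, ← Units.coe_prod, ← Units.coe_prod,
    Fintype.prod_pi_mulSingle',
    prod_eq_one fun i _ => Pi.mulSingle_eq_of_ne (fun hi => hj ⟨i, hi⟩) _] at h_flip
  simp at h_flip

open scoped Classical in
lemma sum_signCharacter [DecidableEq ι] (f : ι → ι) :
    ∑ ε, signCharacter f ε = if Bijective f then 2 ^ Fintype.card ι else 0 := by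
  split_ifs with hf
  · simp [signCharacter_eq_one_of_bijective hf]
  · exact sum_hom_units_eq_zero _
      (signCharacter_ne_one_of_not_surjective fun hs => hf (Finite.surjective_iff_bijective.mp hs))

open scoped Classical in
lemma sum_ite_bijective [DecidableEq ι] {M : Type*} [AddCommMonoid M] (g : (ι → ι) → M) :
    ∑ f : ι → ι, (if Bijective f then g f else 0) = ∑ σ : Equiv.Perm ι, g σ := by
  rw [← sum_filter, sum_subtype _ mem_filter_univ]
  exact Equiv.bijectiveEquiv.sum_comp (fun σ : Equiv.Perm ι => g σ)

theorem Matrix.two_pow_card_mul_permanent [DecidableEq ι] {R : Type*} [CommRing R]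
    (A : Matrix ι ι R) :
    2 ^ Fintype.card ι * A.permanent =
      ∑ ε : ι → ℤˣ, (∏ j, ((ε j : ℤ) : R)) * ∏ i, (A *ᵥ fun j => ((ε j : ℤ) : R)) i := by
  calc 2 ^ Fintype.card ι * A.permanent
      = ∑ σ : Equiv.Perm ι, (∏ i, A i (σ i)) * 2 ^ Fintype.card ι := by
        rw [← permanent_transpose, permanent, mul_sum]
        exact sum_congr rfl fun _ _ => mul_comm _ _
    _ = ∑ f : ι → ι, (∏ i, A i (f i)) * ((∑ ε, signCharacter f ε : ℤ) : R) := by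
        refine (sum_ite_bijective fun f : ι → ι => (∏ i, A i (f i)) * 2 ^ Fintype.card ι).symm.trans
          (sum_congr rfl fun f _ => ?_)
        rw [sum_signCharacter]
        split_ifs <;> simp
    _ = _ := by
        simp_rw [signCharacter_apply, mulVec, dotProduct, Fintype.prod_sum, mul_sum]
        rw [sum_comm]
        push_cast
        refine sum_congr rfl fun f _ => ?_
        rw [mul_sum]
        refine sum_congr rfl fun ε _ => ?_
        rw [prod_mul_distrib, prod_mul_distrib]
        ring

lemma prod_le_sum_div_card_pow {κ : Type*} (s : Finset κ) (z : κ → ℝ) (hz : ∀ i ∈ s, 0 ≤ z i) :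
    ∏ i ∈ s, z i ≤ ((∑ i ∈ s, z i) / #s) ^ #s := by
  rcases s.eq_empty_or_nonempty with rfl | hs
  · simp
  have amgm := Real.geom_mean_le_arith_mean s (fun _ => 1) z (fun _ _ => zero_le_one)
    (by simpa using hs) hz
  simp only [Real.rpow_one, sum_const, nsmul_eq_mul, mul_one, one_mul] at amgm
  calc ∏ i ∈ s, z i = ((∏ i ∈ s, z i) ^ ((#s : ℝ)⁻¹)) ^ #s :=
        (Real.rpow_inv_natCast_pow (prod_nonneg hz) hs.card_pos.ne').symm
    _ ≤ ((∑ i ∈ s, z i) / #s) ^ #s :=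
        pow_le_pow_left₀ (Real.rpow_nonneg (prod_nonneg hz) _) amgm _

lemma EuclideanSpace.prod_norm_sq_le {𝕜 : Type*} [RCLike 𝕜] (v : EuclideanSpace 𝕜 ι) :
    ∏ i, ‖v i‖ ^ 2 ≤ (‖v‖ ^ 2 / Fintype.card ι) ^ Fintype.card ι := by
  rw [EuclideanSpace.norm_sq_eq]
  exact prod_le_sum_div_card_pow univ _ fun i _ => sq_nonneg _

lemma prod_norm_mulVec_le_opNorm_pow {n : ℕ} (A : Matrix (Fin n) (Fin n) ℂ) {x : Fin n → ℂ}
    (hx : ∀ j, ‖x j‖ = 1) : ∏ i, ‖(A *ᵥ x) i‖ ≤ opNorm A ^ n := by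
  have hx_norm : ‖WithLp.toLp 2 x‖ ^ 2 = n := by simp [EuclideanSpace.norm_sq_eq, hx]
  have hAx : ‖WithLp.toLp 2 (A *ᵥ x)‖ ≤ opNorm A * ‖WithLp.toLp 2 x‖ :=
    (LinearMap.toContinuousLinearMap (toEuclideanLin A)).le_opNorm (WithLp.toLp 2 x)
  have hAx_sq : ‖WithLp.toLp 2 (A *ᵥ x)‖ ^ 2 / n ≤ opNorm A ^ 2 :=
    div_le_of_le_mul₀ (by positivity) (sq_nonneg _) (by rw [← hx_norm, ← mul_pow]; gcongr)
  refine le_of_pow_le_pow_left₀ two_ne_zero (pow_nonneg (norm_nonneg _) n) ?_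
  calc (∏ i, ‖(A *ᵥ x) i‖) ^ 2 = ∏ i, ‖(WithLp.toLp 2 (A *ᵥ x)) i‖ ^ 2 := by rw [← prod_pow]
    _ ≤ (‖WithLp.toLp 2 (A *ᵥ x)‖ ^ 2 / n) ^ n := by
        simpa using EuclideanSpace.prod_norm_sq_le (WithLp.toLp 2 (A *ᵥ x))
    _ ≤ (opNorm A ^ 2) ^ n := by gcongr
    _ = (opNorm A ^ n) ^ 2 := by ring

/-- For any `n × n` complex matrix `A`, the permanent satisfies `|Per(A)| ≤ ‖A‖^n`. -/
theorem permanent_le_opNorm_pow (n : ℕ) (A : Matrix (Fin n) (Fin n) ℂ) :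
    ‖∑ σ : Equiv.Perm (Fin n), ∏ i, A i (σ i)‖ ≤ opNorm A ^ n := by
  let sign (ε : Fin n → ℤˣ) : Fin n → ℂ := fun j => ((ε j : ℤ) : ℂ)
  have norm_sign (ε : Fin n → ℤˣ) (j : Fin n) : ‖sign ε j‖ = 1 := by
    rcases Int.units_eq_one_or (ε j) with h | h <;> simp [sign, h]
  have hper : ∑ σ : Equiv.Perm (Fin n), ∏ i, A i (σ i) = A.permanent := by
    rw [← permanent_transpose]; rfl
  rw [hper]
  refine le_of_mul_le_mul_left ?_ (by positivity : (0 : ℝ) < 2 ^ n)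
  calc 2 ^ n * ‖A.permanent‖ = ‖∑ ε, (∏ j, sign ε j) * ∏ i, (A *ᵥ sign ε) i‖ := by
        rw [← A.two_pow_card_mul_permanent]; simp
    _ ≤ ∑ ε, ‖(∏ j, sign ε j) * ∏ i, (A *ᵥ sign ε) i‖ := norm_sum_le _ _
    _ ≤ ∑ _ε : Fin n → ℤˣ, opNorm A ^ n := sum_le_sum fun ε _ => by
        simpa [norm_prod, norm_sign] using prod_norm_mulVec_le_opNorm_pow A (norm_sign ε)
    _ = 2 ^ n * opNorm A ^ n := by simp
end

section
/- Let B be an n×k complex matrix, s_1,…,s_k positive integers summing to n, and A the n×n matrix consisting of s_j copies of the j-th column of B for each j. Let X = R[s_1+1] × ⋯ × R[s_k+1] where R[m] is the set of m-th roots of unity. For x ∈ X define y_j = √(s_j)·x_j and GenGly_x(A) := (s_1!⋯s_k!)/(s_1^{s_1}⋯s_k^{s_k}) · conj(y_1)^{s_1}⋯conj(y_k)^{s_k} · ∏_{i=1}^n (y_1 b_{i,1} + ⋯ + y_k b_{i,k}). Then E_{x ∈ X}[GenGly_x(A)] = Per(A), where the expectation is uniform over X. -/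
/-!
Expanding `∏ᵢ ∑ⱼ yⱼ bᵢⱼ` gives `∑_g ∏ᵢ b_{i,g(i)} · ∏ⱼ yⱼ^{mⱼ(g)}` over all maps
`g : [n] → [k]`, with `mⱼ(g) = |g⁻¹(j)|`. For `m ≤ s`, averaging `conj(y)^s y^m` over
`y = √s·ζ` with `ζ` an `(s+1)`-th root of unity gives `s^s` if `m = s` and `0` otherwise,
as `conj(y)^s y^m = s^m conj(y)^(s-m)`. Since `∑ⱼ mⱼ(g) = n = ∑ⱼ sⱼ`, some `mⱼ(g) < sⱼ`
unless `m(g) = s`, so only the maps with fibre sizes `s` survive, each with weight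
`∏ⱼ sⱼ^{sⱼ}`. On the other side `Per(A) = ∑_σ ∏ᵢ b_{i,c(σ i)}`, and every such map is
`c ∘ σ` for exactly `∏ⱼ sⱼ!` permutations `σ`.
-/

/-- `root m t = e^{2πit/m}`, the `t`-th among the `m`-th roots of unity. -/
noncomputable def root (m t : ℕ) : ℂ :=
  Complex.exp (2 * Real.pi * Complex.I * t / m)

open Finset

lemma isPrimitiveRoot_root_one {N : ℕ} (hN : N ≠ 0) : IsPrimitiveRoot (root N 1) N := by
  convert Complex.isPrimitiveRoot_exp N hN using 2
  unfold root
  push_cast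
  ring_nf

lemma root_eq_pow (N t : ℕ) : root N t = root N 1 ^ t := by
  unfold root
  rw [← Complex.exp_nat_mul]
  push_cast
  ring_nf

lemma conj_root (N t : ℕ) : starRingEnd ℂ (root N t) = (root N t)⁻¹ := by
  unfold root
  rw [← Complex.exp_conj, ← Complex.exp_neg]
  simp only [map_div₀, map_mul, map_ofNat, Complex.conj_ofReal, Complex.conj_I, map_natCast]
  ring_nf

lemma sum_root_pow {N d : ℕ} (hdN : d < N) :
    ∑ t : Fin N, root N t ^ d = if d = 0 then (N : ℂ) else 0 := by
  have hζ := isPrimitiveRoot_root_one (N := N) (by omega)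
  have hterm : ∀ t : Fin N, root N t ^ d = (root N 1 ^ d) ^ (t : ℕ) := fun t => by
    rw [root_eq_pow, ← pow_mul, ← pow_mul, mul_comm]
  rw [sum_congr rfl fun t _ => hterm t, Fin.sum_univ_eq_sum_range (fun t => (root N 1 ^ d) ^ t)]
  split_ifs with hd
  · simp [hd]
  · have hω : (root N 1 ^ d) ^ N = 1 := by
      rw [← pow_mul, mul_comm, pow_mul, hζ.pow_eq_one, one_pow]
    rw [geom_sum_eq (hζ.pow_ne_one_of_pos_of_lt hd hdN) N, hω, sub_self, zero_div]

lemma sum_conj_pow_mul_pow (r : ℝ) {N s m : ℕ} (hsN : s < N) (hms : m ≤ s) :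
    ∑ t : Fin N, starRingEnd ℂ (r * root N t) ^ s * (r * root N t) ^ m
      = if m = s then (r : ℂ) ^ (2 * s) * N else 0 := by
  obtain ⟨d, rfl⟩ := Nat.exists_eq_add_of_le hms
  have hterm : ∀ t : Fin N, starRingEnd ℂ (r * root N t) ^ (m + d) * (r * root N t) ^ m
      = (r : ℂ) ^ (2 * m + d) * starRingEnd ℂ (root N t ^ d) := fun t => by
    have hunit : starRingEnd ℂ (root N t) * root N t = 1 := by
      rw [conj_root]
      exact inv_mul_cancel₀ (Complex.exp_ne_zero _)
    simp only [map_mul, map_pow, Complex.conj_ofReal]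
    calc _ = (r : ℂ) ^ (2 * m + d) * (starRingEnd ℂ (root N t) * root N t) ^ m
          * starRingEnd ℂ (root N t) ^ d := by ring
      _ = _ := by rw [hunit, one_pow, mul_one]
  rw [sum_congr rfl fun t _ => hterm t, ← mul_sum, ← map_sum, sum_root_pow (by omega)]
  by_cases hd : d = 0
  · subst hd
    simp
  · simp [hd]

section Fibers

variable {ι κ : Type*} [Fintype ι] [Fintype κ] [DecidableEq κ]

def fiberCard (g : ι → κ) (j : κ) : ℕ := #{i | g i = j}

lemma sum_fiberCard (g : ι → κ) : ∑ j, fiberCard g j = Fintype.card ι :=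
  (card_eq_sum_card_fiberwise fun i _ => mem_univ (g i)).symm

lemma prod_comp_eq_prod_pow_fiberCard {M : Type*} [CommMonoid M] (g : ι → κ) (v : κ → M) :
    ∏ i, v (g i) = ∏ j, v j ^ fiberCard g j := by
  simp [← Fintype.prod_fiberwise' g v, fiberCard, Fintype.card_subtype]

variable [DecidableEq ι]

lemma prod_sum_mul_eq_sum_prod_mul_prod_pow {R : Type*} [CommSemiring R] (B : Matrix ι κ R)
    (y : κ → R) :
    ∏ i, ∑ j, y j * B i j = ∑ g : ι → κ, (∏ i, B i (g i)) * ∏ j, y j ^ fiberCard g j := by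
  rw [prod_univ_sum]
  refine Fintype.sum_congr _ _ fun g => ?_
  rw [prod_mul_distrib, prod_comp_eq_prod_pow_fiberCard, mul_comm]

def permCompEqEquiv (c g : ι → κ) :
    {σ : Equiv.Perm ι // c ∘ σ = g} ≃ (∀ j, {i // g i = j} ≃ {i // c i = j}) where
  toFun σ j :=
    { toFun x := ⟨σ.1 x.1, (congrFun σ.2 x.1).trans x.2⟩
      invFun x := ⟨σ.1.symm x.1, by rw [← congrFun σ.2]; simpa using x.2⟩
      left_inv x := by simp
      right_inv x := by simp }
  invFun e :=
    ⟨(Equiv.sigmaFiberEquiv g).symm.trans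
      ((Equiv.sigmaCongrRight e).trans (Equiv.sigmaFiberEquiv c)),
      funext fun i => (e (g i) ⟨i, rfl⟩).2⟩
  left_inv σ := rfl
  right_inv e := by
    funext j
    ext ⟨i, rfl⟩
    rfl

lemma card_perm_comp_eq (c g : ι → κ) :
    Fintype.card {σ : Equiv.Perm ι // c ∘ σ = g}
      = if fiberCard g = fiberCard c then ∏ j, (fiberCard c j).factorial else 0 := by
  have hcard : ∀ (f : ι → κ) j, Fintype.card {i // f i = j} = fiberCard f j :=
    fun f j => Fintype.card_subtype _
  rw [Fintype.card_congr (permCompEqEquiv c g), Fintype.card_pi]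
  split_ifs with h
  · refine prod_congr rfl fun j _ => ?_
    rw [Fintype.card_equiv (Fintype.equivOfCardEq (by rw [hcard, hcard, h])), hcard, h]
  · obtain ⟨j, hj⟩ := Function.ne_iff.mp h
    refine prod_eq_zero (mem_univ j) (Fintype.card_eq_zero_iff.mpr ⟨fun e => hj ?_⟩)
    rw [← hcard, ← hcard, Fintype.card_congr e]

lemma sum_perm_comp {M : Type*} [AddCommMonoid M] (c : ι → κ) (P : (ι → κ) → M) :
    ∑ σ : Equiv.Perm ι, P (c ∘ σ)
      = (∏ j, (fiberCard c j).factorial) • ∑ g with fiberCard g = fiberCard c, P g := by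
  rw [← Fintype.sum_fiberwise (fun σ : Equiv.Perm ι => c ∘ σ), smul_sum, sum_filter]
  refine Fintype.sum_congr _ _ fun g => ?_
  rw [Fintype.sum_congr _ (fun _ => P g) fun σ => congrArg P σ.2, sum_const, card_univ,
    card_perm_comp_eq]
  split_ifs <;> simp

end Fibers

lemma sum_pi_prod_conj_pow_mul_pow {κ : Type*} [Fintype κ] [DecidableEq κ] (s m : κ → ℕ)
    (hms : ∑ j, m j = ∑ j, s j) :
    ∑ f : (∀ j, Fin (s j + 1)), ∏ j,
        starRingEnd ℂ ((Real.sqrt (s j) : ℂ) * root (s j + 1) (f j)) ^ s j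
          * ((Real.sqrt (s j) : ℂ) * root (s j + 1) (f j)) ^ m j
      = if m = s then (∏ j, (s j : ℂ) ^ s j) * ∏ j, ((s j : ℂ) + 1) else 0 := by
  rw [← Fintype.prod_sum fun j (t : Fin (s j + 1)) =>
    starRingEnd ℂ ((Real.sqrt (s j) : ℂ) * root (s j + 1) t) ^ s j
      * ((Real.sqrt (s j) : ℂ) * root (s j + 1) t) ^ m j]
  split_ifs with h
  · subst h
    rw [← prod_mul_distrib]
    refine prod_congr rfl fun j _ => ?_
    rw [sum_conj_pow_mul_pow _ (Nat.lt_succ_self _) le_rfl, if_pos rfl, pow_mul,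
      ← Complex.ofReal_pow, Real.sq_sqrt (Nat.cast_nonneg _)]
    push_cast
    ring
  · obtain ⟨j, hj⟩ : ∃ j, m j < s j := by
      by_contra! hge
      exact h (funext fun j =>
        ((sum_eq_sum_iff_of_le fun j _ => hge j).mp hms.symm j (mem_univ j)).symm)
    refine prod_eq_zero (mem_univ j) ?_
    rw [sum_conj_pow_mul_pow _ (Nat.lt_succ_self _) hj.le, if_neg hj.ne]

lemma sum_conj_monomial_mul_prod_sum {ι κ : Type*} [Fintype ι] [DecidableEq ι] [Fintype κ]
    [DecidableEq κ] (s : κ → ℕ) (hs : ∑ j, s j = Fintype.card ι) (B : Matrix ι κ ℂ) :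
    ∑ f : (∀ j, Fin (s j + 1)),
        (∏ j, starRingEnd ℂ ((Real.sqrt (s j) : ℂ) * root (s j + 1) (f j)) ^ s j) *
          ∏ i, ∑ j, ((Real.sqrt (s j) : ℂ) * root (s j + 1) (f j)) * B i j
      = (∏ j, (s j : ℂ) ^ s j) * (∏ j, ((s j : ℂ) + 1)) *
          ∑ g with fiberCard g = s, ∏ i, B i (g i) := by
  simp_rw [prod_sum_mul_eq_sum_prod_mul_prod_pow, mul_sum]
  rw [sum_comm, sum_filter]
  refine sum_congr rfl fun g _ => ?_
  calc _ = (∏ i, B i (g i)) * ∑ f : (∀ j, Fin (s j + 1)), ∏ j,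
          starRingEnd ℂ ((Real.sqrt (s j) : ℂ) * root (s j + 1) (f j)) ^ s j
            * ((Real.sqrt (s j) : ℂ) * root (s j + 1) (f j)) ^ fiberCard g j := by
        rw [mul_sum]
        refine sum_congr rfl fun f _ => ?_
        rw [prod_mul_distrib]
        ring
    _ = _ := by
        rw [sum_pi_prod_conj_pow_mul_pow s (fiberCard g) (by rw [sum_fiberCard, hs])]
        split_ifs <;> ring

theorem genGlynn_expectation_general (n k : ℕ) (s : Fin k → ℕ)
    (B : Matrix (Fin n) (Fin k) ℂ) (c : Fin n → Fin k)
    (hc : ∀ j, (Finset.univ.filter fun i => c i = j).card = s j)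
    (A : Matrix (Fin n) (Fin n) ℂ) (hA : ∀ i m, A i m = B i (c m)) :
    (∑ f : (∀ j, Fin (s j + 1)),
        ((∏ j, (s j).factorial : ℕ) : ℂ) / (∏ j, (s j : ℂ) ^ s j) *
          (∏ j, (starRingEnd ℂ) ((Real.sqrt (s j) : ℂ) * root (s j + 1) (f j)) ^ s j) *
          ∏ i, ∑ j, ((Real.sqrt (s j) : ℂ) * root (s j + 1) (f j)) * B i j)
        / (∏ j, ((s j : ℂ) + 1))
      = ∑ σ : Equiv.Perm (Fin n), ∏ i, A i (σ i) := by
  have hfib : fiberCard c = s := funext hc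
  have hs : ∑ j, s j = Fintype.card (Fin n) := by rw [← hfib, sum_fiberCard]
  have hS : ∏ j, (s j : ℂ) ^ s j ≠ 0 :=
    prod_ne_zero_iff.mpr fun j _ => by exact_mod_cast (Nat.pow_self_pos (n := s j)).ne'
  have hD : ∏ j, ((s j : ℂ) + 1) ≠ 0 :=
    prod_ne_zero_iff.mpr fun j _ => Nat.cast_add_one_ne_zero (s j)
  have hperm : ∑ σ : Equiv.Perm (Fin n), ∏ i, A i (σ i)
      = (∏ j, (s j).factorial) • ∑ g with fiberCard g = s, ∏ i, B i (g i) := by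
    simpa only [hA, hfib, Function.comp_apply] using sum_perm_comp c fun g => ∏ i, B i (g i)
  simp only [mul_assoc _ (Finset.prod _ _), ← mul_sum]
  rw [sum_conj_monomial_mul_prod_sum s hs B, hperm, nsmul_eq_mul]
  field_simp

/-- **The generalized Glynn estimator is unbiased.**  Let `B` be `n × k`, let `s_1,…,s_k > 0`
sum to `n`, and let `A` be the `n × n` matrix consisting of `s_j` copies of the `j`-th column
of `B` (encoded by `c : Fin n → Fin k` with `|c⁻¹(j)| = s_j` and `A i m = B i (c m)`).
With `x` uniform on `X = R[s_1+1] × ⋯ × R[s_k+1]` and `y_j = √(s_j)·x_j`,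
`E_x[GenGly_x(A)] = Per(A)` where
`GenGly_x(A) = (s_1!⋯s_k!)/(s_1^{s_1}⋯s_k^{s_k}) · conj(y_1)^{s_1}⋯conj(y_k)^{s_k} · ∏_i (By)_i`. -/
theorem genGlynn_expectation (n k : ℕ) (s : Fin k → ℕ)
    (hpos : ∀ j, 0 < s j) (hsum : ∑ j, s j = n)
    (B : Matrix (Fin n) (Fin k) ℂ) (c : Fin n → Fin k)
    (hc : ∀ j, (Finset.univ.filter fun i => c i = j).card = s j)
    (A : Matrix (Fin n) (Fin n) ℂ) (hA : ∀ i m, A i m = B i (c m)) :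
    (∑ f : (∀ j, Fin (s j + 1)),
        ((∏ j, (s j).factorial : ℕ) : ℂ) / (∏ j, (s j : ℂ) ^ s j) *
          (∏ j, (starRingEnd ℂ) ((Real.sqrt (s j) : ℂ) * root (s j + 1) (f j)) ^ s j) *
          ∏ i, ∑ j, ((Real.sqrt (s j) : ℂ) * root (s j + 1) (f j)) * B i j)
        / (∏ j, ((s j : ℂ) + 1))
      = ∑ σ : Equiv.Perm (Fin n), ∏ i, A i (σ i) :=
  genGlynn_expectation_general n k s B c hc A hA
end
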